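/- (Proposition 1, first chain) Let β_{i−1} ≥ 2L for all i, x_i = Prox_{β_{i−1}, x_{i−1}}(y_i), ξ_i = y_i − ∇φ(x_{i−1}), and x̂_N = [∑_{i=1}^N β_{i−1}^{-1}]^{-1} ∑_{i=1}^N β_{i−1}^{-1} x_i. Then for any z ∈ X: [∑_{i=1}^N β_{i−1}^{-1}] (F(x̂_N) − F(z)) ≤ V_{x_0}(z) + ∑_{i=1}^N [ ⟨ξ_i, z − x_{i−1}⟩/β_{i−1} + ‖ξ_i‖_*²/β_{i−1}² ]. -/

import Mathlib

/-!
The descent lemma `φ b ≤ φ a + φ' a (b - a) + L/2 ‖b - a‖²` and the strong-convexity bound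
`½ ‖b - a‖² ≤ V_a(b)` follow by comparing the restrictions of `φ` and `ϑ` to the segment `[a, b]`
with a parabola. For one prox step `x ↦ p` they combine with the gradient inequality for `φ` at
`x` and the three-point inequality of the prox step into
`F p - F z ≤ β (V_x z - V_p z) + ξ (z - x) + ‖ξ‖² / β`,
where the cross term `ξ (x - p) ≤ ‖ξ‖ ‖p - x‖` is absorbed by `(β - L)/2 ‖p - x‖²` because
`β ≥ 2L`. Dividing by `β`, the divergences telescope over the steps, and Jensen's inequality for
the convex `F` at the weighted average `x̂_N` concludes.
-/

open Finset Set AffineMap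

lemma sub_le_half_of_hasDerivWithinAt_le_mul {g g' : ℝ → ℝ} {c : ℝ}
    (hg : ∀ t ∈ Icc (0 : ℝ) 1, HasDerivWithinAt g (g' t) (Icc 0 1) t)
    (hg' : ∀ t ∈ Ioo (0 : ℝ) 1, g' t ≤ c * t) : g 1 - g 0 ≤ c / 2 := by
  have hsq (t : ℝ) : HasDerivAt (fun t : ℝ => c / 2 * t ^ 2) (c * t) t :=
    ((hasDerivAt_pow 2 t).const_mul (c / 2)).congr_deriv (by push_cast; ring)
  have hd : ∀ t ∈ Icc (0 : ℝ) 1,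
      HasDerivWithinAt (fun t => c / 2 * t ^ 2 - g t) (c * t - g' t) (Icc 0 1) t :=
    fun t ht => (hsq t).hasDerivWithinAt.sub (hg t ht)
  have hmono : MonotoneOn (fun t => c / 2 * t ^ 2 - g t) (Icc 0 1) :=
    monotoneOn_of_hasDerivWithinAt_nonneg (convex_Icc 0 1)
      (fun t ht => (hd t ht).continuousWithinAt)
      (fun t ht => (hd t (interior_subset ht)).mono interior_subset)
      (fun t ht => by rw [interior_Icc] at ht; linarith [hg' t ht])
  have := hmono (left_mem_Icc.2 zero_le_one) (right_mem_Icc.2 zero_le_one) zero_le_one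
  simp only at this
  linarith

lemma half_le_sub_of_mul_le_hasDerivWithinAt {g g' : ℝ → ℝ} {c : ℝ}
    (hg : ∀ t ∈ Icc (0 : ℝ) 1, HasDerivWithinAt g (g' t) (Icc 0 1) t)
    (hg' : ∀ t ∈ Ioo (0 : ℝ) 1, c * t ≤ g' t) : c / 2 ≤ g 1 - g 0 := by
  have := sub_le_half_of_hasDerivWithinAt_le_mul (g := -g) (c := -c)
    (fun t ht => (hg t ht).neg) (fun t ht => by linarith [hg' t ht])
  simp only [Pi.neg_apply] at this
  linarith

lemma nonneg_of_isMinOn_Icc_of_hasDerivWithinAt {g : ℝ → ℝ} {g' : ℝ}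
    (hmin : IsMinOn g (Icc 0 1) 0) (hg : HasDerivWithinAt g g' (Icc 0 1) 0) : 0 ≤ g' := by
  simpa using hmin.localize.hasFDerivWithinAt_nonneg hg.hasFDerivWithinAt
    (y := 1) (mem_posTangentConeAt_of_segment_subset (by simp [segment_eq_Icc]))

def bregman {E : Type*} [NormedAddCommGroup E] [NormedSpace ℝ E] (ϑ : E → ℝ)
    (ϑ' : E → E →L[ℝ] ℝ) (x z : E) : ℝ :=
  ϑ z - ϑ x - ϑ' x (z - x)

lemma bregman_sub_bregman_sub_bregman {E : Type*} [NormedAddCommGroup E] [NormedSpace ℝ E]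
    (ϑ : E → ℝ) (ϑ' : E → E →L[ℝ] ℝ) (x p z : E) :
    bregman ϑ ϑ' x z - bregman ϑ ϑ' p z - bregman ϑ ϑ' x p = (ϑ' p - ϑ' x) (z - p) := by
  simp only [bregman, sub_apply, map_sub]
  ring

section Segment

variable {E : Type*} [NormedAddCommGroup E] [NormedSpace ℝ E] {X : Set E} {f : E → ℝ}
  {f' : E → E →L[ℝ] ℝ} {a b : E}

lemma Convex.hasDerivWithinAt_comp_lineMap (hX : Convex ℝ X)
    (hf : ∀ u ∈ X, HasFDerivWithinAt f (f' u) X u) (ha : a ∈ X) (hb : b ∈ X) {t : ℝ}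
    (ht : t ∈ Icc (0 : ℝ) 1) :
    HasDerivWithinAt (fun s => f (lineMap a b s)) (f' (lineMap a b t) (b - a)) (Icc 0 1) t :=
  (hf _ (hX.lineMap_mem ha hb ht)).comp_hasDerivWithinAt t hasDerivWithinAt_lineMap
    fun _ hs => hX.lineMap_mem ha hb hs

lemma Convex.bregman_le_half_of_fderiv_sub_apply_le (hX : Convex ℝ X)
    (hf : ∀ u ∈ X, HasFDerivWithinAt f (f' u) X u) (ha : a ∈ X) (hb : b ∈ X) {c : ℝ}
    (hc : ∀ t ∈ Ioo (0 : ℝ) 1, (f' (lineMap a b t) - f' a) (b - a) ≤ c * t) :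
    bregman f f' a b ≤ c / 2 := by
  have := sub_le_half_of_hasDerivWithinAt_le_mul
    (g := fun t => f (lineMap a b t) - t * f' a (b - a))
    (fun t ht => (hX.hasDerivWithinAt_comp_lineMap hf ha hb ht).sub
      (hasDerivAt_mul_const _).hasDerivWithinAt) hc
  simp only [lineMap_apply_one, lineMap_apply_zero, one_mul, zero_mul, sub_zero] at this
  rw [bregman]
  linarith

lemma Convex.half_le_bregman_of_le_fderiv_sub_apply (hX : Convex ℝ X)
    (hf : ∀ u ∈ X, HasFDerivWithinAt f (f' u) X u) (ha : a ∈ X) (hb : b ∈ X) {c : ℝ}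
    (hc : ∀ t ∈ Ioo (0 : ℝ) 1, c * t ≤ (f' (lineMap a b t) - f' a) (b - a)) :
    c / 2 ≤ bregman f f' a b := by
  have := half_le_sub_of_mul_le_hasDerivWithinAt
    (g := fun t => f (lineMap a b t) - t * f' a (b - a))
    (fun t ht => (hX.hasDerivWithinAt_comp_lineMap hf ha hb ht).sub
      (hasDerivAt_mul_const _).hasDerivWithinAt) hc
  simp only [lineMap_apply_one, lineMap_apply_zero, one_mul, zero_mul, sub_zero] at this
  rw [bregman]
  linarith

lemma Convex.bregman_le_of_lipschitz (hX : Convex ℝ X)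
    (hf : ∀ u ∈ X, HasFDerivWithinAt f (f' u) X u) {C : ℝ}
    (hlip : ∀ u ∈ X, ∀ v ∈ X, ‖f' v - f' u‖ ≤ C * ‖u - v‖) (ha : a ∈ X) (hb : b ∈ X) :
    bregman f f' a b ≤ C / 2 * ‖b - a‖ ^ 2 := by
  rw [div_mul_eq_mul_div]
  refine hX.bregman_le_half_of_fderiv_sub_apply_le hf ha hb fun t ht => ?_
  have hdist : ‖a - lineMap a b t‖ = t * ‖b - a‖ := by
    rw [← dist_eq_norm, dist_comm, dist_lineMap_left, Real.norm_of_nonneg ht.1.le,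
      dist_eq_norm, norm_sub_rev]
  calc (f' (lineMap a b t) - f' a) (b - a) ≤ ‖f' (lineMap a b t) - f' a‖ * ‖b - a‖ :=
        (le_abs_self _).trans ((f' (lineMap a b t) - f' a).le_opNorm _)
    _ ≤ C * ‖a - lineMap a b t‖ * ‖b - a‖ := by
        gcongr
        exact hlip a ha _ (hX.lineMap_mem ha hb (Ioo_subset_Icc_self ht))
    _ = C * ‖b - a‖ ^ 2 * t := by rw [hdist]; ring

lemma Convex.half_sq_le_bregman (hX : Convex ℝ X)
    (hf : ∀ u ∈ X, HasFDerivWithinAt f (f' u) X u)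
    (hmono : ∀ u ∈ X, ∀ v ∈ X, ‖u - v‖ ^ 2 ≤ (f' u - f' v) (u - v)) (ha : a ∈ X) (hb : b ∈ X) :
    1 / 2 * ‖b - a‖ ^ 2 ≤ bregman f f' a b := by
  rw [one_div_mul_eq_div]
  refine hX.half_le_bregman_of_le_fderiv_sub_apply hf ha hb fun t ht => ?_
  have hsub : lineMap a b t - a = t • (b - a) := lineMap_vsub_left a b t
  have := hmono _ (hX.lineMap_mem ha hb (Ioo_subset_Icc_self ht)) a ha
  rw [hsub, norm_smul, map_smul, smul_eq_mul, Real.norm_of_nonneg ht.1.le, mul_pow] at this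
  nlinarith [ht.1]

lemma Convex.bregman_nonneg (hX : Convex ℝ X)
    (hf : ∀ u ∈ X, HasFDerivWithinAt f (f' u) X u)
    (hmono : ∀ u ∈ X, ∀ v ∈ X, ‖u - v‖ ^ 2 ≤ (f' u - f' v) (u - v)) (ha : a ∈ X) (hb : b ∈ X) :
    0 ≤ bregman f f' a b :=
  (by positivity : (0 : ℝ) ≤ 1 / 2 * ‖b - a‖ ^ 2).trans (hX.half_sq_le_bregman hf hmono ha hb)

end Segment

section FirstOrder

variable {E : Type*} [NormedAddCommGroup E] [NormedSpace ℝ E] {X : Set E} {s g : E → ℝ}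
  {g' : E →L[ℝ] ℝ} {p w : E}

/-- Bounding `s` by its chord on `[p, w]`, the differentiable function
`t ↦ g (lineMap p w t) + t (s w - s p)` is minimised over `[0, 1]` at `0`. -/
lemma ConvexOn.le_add_fderiv_of_isMinOn_add (hs : ConvexOn ℝ X s)
    (hg : HasFDerivWithinAt g g' X p) (hmin : IsMinOn (s + g) X p) (hp : p ∈ X) (hw : w ∈ X) :
    s p ≤ s w + g' (w - p) := by
  have hmaps : MapsTo (lineMap p w) (Icc (0 : ℝ) 1) X := fun _ ht => hs.1.lineMap_mem hp hw ht
  have hderiv : HasDerivWithinAt (fun t => g (lineMap p w t) + t * (s w - s p))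
      (g' (w - p) + (s w - s p)) (Icc 0 1) 0 :=
    (hg.comp_hasDerivWithinAt_of_eq 0 hasDerivWithinAt_lineMap hmaps
      (lineMap_apply_zero p w).symm).add
      (hasDerivAt_mul_const _).hasDerivWithinAt |>.congr_deriv (by simp)
  have hmin' : IsMinOn (fun t => g (lineMap p w t) + t * (s w - s p)) (Icc 0 1) 0 := by
    refine isMinOn_iff.2 fun t ht => ?_
    have hchord : s (lineMap p w t) ≤ (1 - t) * s p + t * s w := by
      simpa [lineMap_apply_module] using hs.2 hp hw (by linarith [ht.2]) ht.1 (by ring)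
    have := isMinOn_iff.1 hmin _ (hmaps ht)
    simp only [Pi.add_apply, lineMap_apply_zero, zero_mul, add_zero] at this ⊢
    nlinarith
  linarith [nonneg_of_isMinOn_Icc_of_hasDerivWithinAt hmin' hderiv]

/-- The first-order condition for the everywhere-minimised `s + (-s) = 0`. -/
lemma ConvexOn.add_fderiv_le (hs : ConvexOn ℝ X s) (hs' : HasFDerivWithinAt s g' X p)
    (hp : p ∈ X) (hw : w ∈ X) : s p + g' (w - p) ≤ s w := by
  have := hs.le_add_fderiv_of_isMinOn_add hs'.neg (fun u _ => by simp) hp hw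
  simp only [neg_apply] at this
  linarith

end FirstOrder

lemma ConvexOn.sum_mul_centerMass_sub_le {E : Type*} [AddCommGroup E] [Module ℝ E]
    {X : Set E} {f : E → ℝ} (hf : ConvexOn ℝ X f) {N : ℕ} (hN : 0 < N) {w : ℕ → ℝ}
    (hw : ∀ i < N, 0 < w i) {p : ℕ → E} (hp : ∀ i < N, p i ∈ X) (a : ℝ) {V c : ℕ → ℝ}
    (hstep : ∀ i < N, w i * (f (p i) - a) ≤ V i - V (i + 1) + c i) (hV : 0 ≤ V N) :
    (∑ i ∈ range N, w i) * (f ((range N).centerMass w p) - a) ≤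
      V 0 + ∑ i ∈ range N, c i := by
  have hw₀ : 0 < ∑ i ∈ range N, w i :=
    sum_pos (fun i hi => hw i (mem_range.1 hi)) (nonempty_range_iff.2 hN.ne')
  calc (∑ i ∈ range N, w i) * (f ((range N).centerMass w p) - a)
      ≤ (∑ i ∈ range N, w i) * ((range N).centerMass w (f ∘ p) - a) := by
        gcongr
        exact hf.map_centerMass_le (fun i hi => (hw i (mem_range.1 hi)).le) hw₀
          (fun i hi => hp i (mem_range.1 hi))
    _ = ∑ i ∈ range N, w i * (f (p i) - a) := by
        simp only [centerMass, smul_eq_mul, Function.comp_apply, mul_sub,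
          mul_inv_cancel_left₀ hw₀.ne', sum_sub_distrib, sum_mul]
    _ ≤ ∑ i ∈ range N, (V i - V (i + 1) + c i) :=
        sum_le_sum fun i hi => hstep i (mem_range.1 hi)
    _ = V 0 - V N + ∑ i ∈ range N, c i := by rw [sum_add_distrib, sum_range_sub']
    _ ≤ V 0 + ∑ i ∈ range N, c i := by linarith

section MirrorDescent

variable {E : Type*} [NormedAddCommGroup E] [NormedSpace ℝ E] {X : Set E} {φ ψ ϑ : E → ℝ}
  {φ' ϑ' : E → E →L[ℝ] ℝ}

lemma hasFDerivWithinAt_bregman {x p : E} (hϑ : HasFDerivWithinAt ϑ (ϑ' p) X p) :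
    HasFDerivWithinAt (bregman ϑ ϑ' x) (ϑ' p - ϑ' x) X p :=
  (hϑ.sub_const (ϑ x)).sub
    ((ϑ' x).hasFDerivAt.comp p ((hasFDerivAt_id p).sub_const x)).hasFDerivWithinAt

lemma ConvexOn.prox_add_bregman_le (hψ : ConvexOn ℝ X ψ) (y : E →L[ℝ] ℝ) {β : ℝ} {x p z : E}
    (hϑ : HasFDerivWithinAt ϑ (ϑ' p) X p) (hp : p ∈ X) (hz : z ∈ X)
    (hprox : IsMinOn (fun u => y u + ψ u + β * bregman ϑ ϑ' x u) X p) :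
    y p + ψ p + β * bregman ϑ ϑ' x p + β * bregman ϑ ϑ' p z ≤
      y z + ψ z + β * bregman ϑ ϑ' x z := by
  have hs : ConvexOn ℝ X (fun u => y u + ψ u) := ((y : E →ₗ[ℝ] ℝ).convexOn hψ.1).add hψ
  have := hs.le_add_fderiv_of_isMinOn_add ((hasFDerivWithinAt_bregman hϑ).const_smul β)
    hprox hp hz
  rw [smul_apply, smul_eq_mul, ← bregman_sub_bregman_sub_bregman ϑ ϑ' x p z] at this
  linarith

theorem mirror_descent_step (hX : Convex ℝ X) (hφ : ConvexOn ℝ X φ)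
    (hφ' : ∀ u ∈ X, HasFDerivWithinAt φ (φ' u) X u) {L : ℝ}
    (hLip : ∀ u ∈ X, ∀ v ∈ X, ‖φ' v - φ' u‖ ≤ L * ‖u - v‖) (hψ : ConvexOn ℝ X ψ)
    (hϑ' : ∀ u ∈ X, HasFDerivWithinAt ϑ (ϑ' u) X u)
    (hstrong : ∀ u ∈ X, ∀ v ∈ X, ‖u - v‖ ^ 2 ≤ (ϑ' u - ϑ' v) (u - v))
    {β : ℝ} (hβ0 : 0 < β) (hβ : 2 * L ≤ β) (y : E →L[ℝ] ℝ) {x p z : E}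
    (hx : x ∈ X) (hp : p ∈ X) (hz : z ∈ X)
    (hprox : IsMinOn (fun u => y u + ψ u + β * bregman ϑ ϑ' x u) X p) :
    φ p + ψ p - (φ z + ψ z) ≤ β * (bregman ϑ ϑ' x z - bregman ϑ ϑ' p z) +
      (y - φ' x) (z - x) + ‖y - φ' x‖ ^ 2 / β := by
  have hdescent := hX.bregman_le_of_lipschitz hφ' hLip hx hp
  have hgrad := hφ.add_fderiv_le (hφ' x hx) hx hz
  have hprox' := hψ.prox_add_bregman_le y (hϑ' p hp) hp hz hprox
  have hsc := hX.half_sq_le_bregman hϑ' hstrong hx hp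
  have hdual : (y - φ' x) (x - p) ≤ ‖y - φ' x‖ * ‖p - x‖ := by
    rw [norm_sub_rev p x]
    exact (le_abs_self _).trans ((y - φ' x).le_opNorm _)
  have hyoung : ‖y - φ' x‖ * ‖p - x‖ + L / 2 * ‖p - x‖ ^ 2 - β / 2 * ‖p - x‖ ^ 2 ≤
      ‖y - φ' x‖ ^ 2 / β := by
    rw [le_div_iff₀ hβ0]
    nlinarith [sq_nonneg (β * ‖p - x‖ - 2 * ‖y - φ' x‖), mul_nonneg hβ0.le (sq_nonneg ‖p - x‖)]
  simp only [bregman, sub_apply, map_sub] at hdescent hgrad hprox' hsc hdual ⊢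
  nlinarith

end MirrorDescent

theorem mirror_descent_chain_general
    {E : Type*} [NormedAddCommGroup E] [NormedSpace ℝ E]
    (X : Set E) (hXconv : Convex ℝ X)
    (φ ψ F : E → ℝ) (φ' : E → (E →L[ℝ] ℝ)) (L : ℝ) (hL : 0 < L)
    (hF : ∀ x ∈ X, F x = φ x + ψ x)
    (hφconv : ConvexOn ℝ X φ)
    (hφdiff : ∀ x ∈ X, HasFDerivWithinAt φ (φ' x) X x)
    (hLip : ∀ x ∈ X, ∀ x' ∈ X, ‖φ' x' - φ' x‖ ≤ L * ‖x - x'‖)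
    (hψconv : ConvexOn ℝ X ψ)
    (ϑ : E → ℝ) (ϑ' : E → (E →L[ℝ] ℝ))
    (hϑdiff : ∀ x ∈ X, HasFDerivWithinAt ϑ (ϑ' x) X x)
    (hstrong : ∀ x ∈ X, ∀ x' ∈ X, (ϑ' x - ϑ' x') (x - x') ≥ ‖x - x'‖ ^ 2)
    (V : E → E → ℝ)
    (hV : ∀ x ∈ X, ∀ z ∈ X, V x z = ϑ z - ϑ x - ϑ' x (z - x))
    (N : ℕ) (hN : 0 < N)
    (β : ℕ → ℝ) (hβ : ∀ i, β i ≥ 2 * L)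
    (x : ℕ → E) (hxX : ∀ i, i ≤ N → x i ∈ X)
    (y : ℕ → (E →L[ℝ] ℝ))
    (hprox : ∀ i < N, IsMinOn
      (fun z => y (i + 1) z + ψ z + β i * V (x i) z) X (x (i + 1)))
    (ξ : ℕ → (E →L[ℝ] ℝ)) (hξ : ∀ i, ξ (i + 1) = y (i + 1) - φ' (x i))
    (S : ℝ) (hS : S = ∑ i ∈ Finset.range N, (β i)⁻¹)
    (xhat : E) (hxhat : xhat = S⁻¹ • ∑ i ∈ Finset.range N, (β i)⁻¹ • x (i + 1))
    (z : E) (hz : z ∈ X) :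
    S * (F xhat - F z) ≤ V (x 0) z +
      ∑ i ∈ Finset.range N,
        (ξ (i + 1) (z - x i) / β i + ‖ξ (i + 1)‖ ^ 2 / (β i) ^ 2) := by
  have hβ0 (i : ℕ) : 0 < β i := by linarith [hβ i]
  have hV' (i : ℕ) (hi : i ≤ N) : V (x i) z = bregman ϑ ϑ' (x i) z := hV _ (hxX i hi) z hz
  have hstep : ∀ i < N, (β i)⁻¹ * (F (x (i + 1)) - F z) ≤ V (x i) z - V (x (i + 1)) z +
      (ξ (i + 1) (z - x i) / β i + ‖ξ (i + 1)‖ ^ 2 / β i ^ 2) := by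
    intro i hi
    have hxi := hxX i hi.le
    have hxi' := hxX (i + 1) hi
    have hprox' :
        IsMinOn (fun u => y (i + 1) u + ψ u + β i * bregman ϑ ϑ' (x i) u) X (x (i + 1)) :=
      isMinOn_iff.2 fun u hu => by
        have := isMinOn_iff.1 (hprox i hi) u hu
        rwa [hV _ hxi _ hu, hV _ hxi _ hxi'] at this
    have := mirror_descent_step hXconv hφconv hφdiff hLip hψconv hϑdiff hstrong (hβ0 i)
      (hβ i) (y (i + 1)) hxi hxi' hz hprox'
    have hb : β i ≠ 0 := (hβ0 i).ne'
    rw [hF _ hxi', hF z hz, hV' i hi.le, hV' (i + 1) hi, hξ, inv_mul_le_iff₀ (hβ0 i)]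
    calc _ ≤ _ := this
      _ = _ := by field_simp; ring
  have hFconv : ConvexOn ℝ X F := (hφconv.add hψconv).congr fun u hu => (hF u hu).symm
  subst hS hxhat
  exact hFconv.sum_mul_centerMass_sub_le hN (fun i _ => inv_pos.2 (hβ0 i))
    (fun i hi => hxX (i + 1) hi) (F z) hstep
    (hV' N le_rfl ▸ hXconv.bregman_nonneg hϑdiff hstrong (hxX N le_rfl) hz)

/-- Proposition 1, first chain: for the mirror descent iterates
`x_i = Prox_{β_{i−1},x_{i−1}}(y_i)` with `β_{i−1} ≥ 2L`, `ξ_i = y_i − ∇φ(x_{i−1})`, and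
`x̂_N = [∑ β_{i−1}⁻¹]⁻¹ ∑ β_{i−1}⁻¹ x_i`, for any `z ∈ X`:
`[∑ β_{i−1}⁻¹](F(x̂_N) − F(z)) ≤ V_{x_0}(z) + ∑ [⟨ξ_i, z − x_{i−1}⟩/β_{i−1} + ‖ξ_i‖²/β_{i−1}²]`. -/
theorem mirror_descent_chain
    {E : Type*} [NormedAddCommGroup E] [NormedSpace ℝ E] [FiniteDimensional ℝ E]
    (X : Set E) (hXconv : Convex ℝ X) (hXcomp : IsCompact X)
    (φ ψ F : E → ℝ) (φ' : E → (E →L[ℝ] ℝ)) (ψ' : E → (E →L[ℝ] ℝ)) (L : ℝ) (hL : 0 < L)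
    (hF : ∀ x ∈ X, F x = φ x + ψ x)
    (hφconv : ConvexOn ℝ X φ)
    (hφdiff : ∀ x ∈ X, HasFDerivWithinAt φ (φ' x) X x)
    (hLip : ∀ x ∈ X, ∀ x' ∈ X, ‖φ' x' - φ' x‖ ≤ L * ‖x - x'‖)
    (hψconv : ConvexOn ℝ X ψ)
    (hψ' : ∀ x ∈ X, ∀ y ∈ X, ψ y ≥ ψ x + ψ' x (y - x))
    (ϑ : E → ℝ) (ϑ' : E → (E →L[ℝ] ℝ))
    (hϑconv : ConvexOn ℝ X ϑ)
    (hϑdiff : ∀ x ∈ X, HasFDerivWithinAt ϑ (ϑ' x) X x)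
    (hstrong : ∀ x ∈ X, ∀ x' ∈ X, (ϑ' x - ϑ' x') (x - x') ≥ ‖x - x'‖ ^ 2)
    (V : E → E → ℝ)
    (hV : ∀ x ∈ X, ∀ z ∈ X, V x z = ϑ z - ϑ x - ϑ' x (z - x))
    (N : ℕ) (hN : 0 < N)
    (β : ℕ → ℝ) (hβ : ∀ i, β i ≥ 2 * L)
    (x : ℕ → E) (hxX : ∀ i, i ≤ N → x i ∈ X)
    (y : ℕ → (E →L[ℝ] ℝ))
    (hprox : ∀ i < N, IsMinOn
      (fun z => y (i + 1) z + ψ z + β i * V (x i) z) X (x (i + 1)))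
    (ξ : ℕ → (E →L[ℝ] ℝ)) (hξ : ∀ i, ξ (i + 1) = y (i + 1) - φ' (x i))
    (S : ℝ) (hS : S = ∑ i ∈ Finset.range N, (β i)⁻¹)
    (xhat : E) (hxhat : xhat = S⁻¹ • ∑ i ∈ Finset.range N, (β i)⁻¹ • x (i + 1))
    (z : E) (hz : z ∈ X) :
    S * (F xhat - F z) ≤ V (x 0) z +
      ∑ i ∈ Finset.range N,
        (ξ (i + 1) (z - x i) / β i + ‖ξ (i + 1)‖ ^ 2 / (β i) ^ 2) :=
  mirror_descent_chain_general X hXconv φ ψ F φ' L hL hF hφconv hφdiff hLip hψconv ϑ ϑ' hϑdiff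
    hstrong V hV N hN β hβ x hxX y hprox ξ hξ S hS xhat hxhat z hz
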